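/- Let K ⊂ ℝ be compact with m = min K and M = max K, m < M, and let d ≥ 1. Let γ: [m,M] → ℝ^d be continuous and differentiable at every point t ∈ K, with derivative g(t) := γ'(t), where g: K → ℝ^d is continuous. Let (a_i, b_i), i ≥ 1, be the connected components of [m,M] ∖ K, and suppose for each i there is a C¹ curve ψ^i: [a_i, b_i] → ℝ^d with ψ^i(a_i) = γ(a_i), ψ^i(b_i) = γ(b_i), (ψ^i)'(a_i) = g(a_i), (ψ^i)'(b_i) = g(b_i), and |(ψ^i)'(t) − g(a_i)| ≤ ε_i for all t ∈ (a_i, b_i), where ε_i → 0 as i → ∞. Define Γ: [m,M] → ℝ^d by Γ(t) = γ(t) for t ∈ K and Γ(t) = ψ^i(t) for t ∈ (a_i, b_i). Then Γ is a C¹ curve whose derivative is given by Γ'(t) = g(t) for t ∈ K and Γ'(t) = (ψ^i)'(t) for t ∈ (a_i, b_i). -/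

import Mathlib

/-!
On a gap `(aᵢ, bᵢ)` the derivative of `ψⁱ` stays within `2εᵢ` of `g` at either endpoint, so by
the mean value inequality `ψⁱ s` differs from `γ e + (s - e) • g e` by at most `2εᵢ |s - e|` at
each endpoint `e`. For `t ∈ K` and `s` in a gap, split `Γ s - Γ t - (s - t) • g t` at the endpoint
`e` lying between `t` and `s`: the part from `t` to `e` is small by the differentiability of `γ`
along `K` and the continuity of `g`, the part from `e` to `s` by the estimate above. Since
`εᵢ → 0`, this handles all but finitely many gaps, and near `t` each remaining gap is either
absent or has `t` as an endpoint, where `ψⁱ` is itself differentiable with derivative `g t`.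
The same splitting of `D s - g t` gives the continuity of the glued derivative `D`.
-/

open Set Filter Topology Asymptotics

theorem eqOn_Icc_of_eqOn_Ioo {β : Type*} {F G : ℝ → β} {a b : ℝ} (h : EqOn F G (Ioo a b))
    (ha : F a = G a) (hb : F b = G b) : EqOn F G (Icc a b) := fun u hu => by
  rcases eq_endpoints_or_mem_Ioo_of_mem_Icc hu with rfl | rfl | hu
  exacts [ha, hb, h hu]

theorem exists_endpoint_mem_uIcc {a b s t : ℝ} (hs : s ∈ Ioo a b) (ht : t ∉ Ioo a b) :
    ∃ e ∈ ({a, b} : Set ℝ), e ∈ uIcc t s := by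
  by_cases hta : t ≤ a
  · exact ⟨a, .inl rfl, Icc_subset_uIcc ⟨hta, hs.1.le⟩⟩
  · have hbt : b ≤ t := not_lt.1 fun h => ht ⟨not_le.1 hta, h⟩
    exact ⟨b, .inr rfl, Icc_subset_uIcc' ⟨hs.2.le, hbt⟩⟩

section IntervalEstimates

variable {E : Type*} [NormedAddCommGroup E]

theorem norm_sub_le_two_mul_of_forall_mem_Ioo {f : ℝ → E} {v : E} {a b C : ℝ} (hab : a < b)
    (hf : ContinuousOn f (Icc a b)) (h : ∀ u ∈ Ioo a b, ‖f u - v‖ ≤ C) {u w : ℝ}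
    (hu : u ∈ Icc a b) (hw : w ∈ Icc a b) : ‖f u - f w‖ ≤ 2 * C := by
  have hIcc : ∀ x ∈ Icc a b, ‖f x - v‖ ≤ C := fun x hx =>
    ContinuousWithinAt.closure_le (by rwa [closure_Ioo hab.ne])
      (((hf x hx).sub continuousWithinAt_const).norm.mono Ioo_subset_Icc_self)
      continuousWithinAt_const h
  calc ‖f u - f w‖ ≤ ‖f u - v‖ + ‖v - f w‖ := norm_sub_le_norm_sub_add_norm_sub _ _ _
    _ ≤ 2 * C := by rw [norm_sub_rev v]; linarith [hIcc u hu, hIcc w hw]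

variable [NormedSpace ℝ E]

theorem norm_sub_sub_smul_le_of_mem_uIcc (f : ℝ → E) {t e s : ℝ} (he : e ∈ uIcc t s) (v w : E) :
    ‖f s - f t - (s - t) • v‖ ≤
      ‖f s - f e - (s - e) • w‖ + |s - t| * ‖w - v‖ + ‖f e - f t - (e - t) • v‖ := by
  calc ‖f s - f t - (s - t) • v‖
      = ‖(f s - f e - (s - e) • w) + (s - e) • (w - v) + (f e - f t - (e - t) • v)‖ := by
        congr 1; module
    _ ≤ ‖f s - f e - (s - e) • w‖ + |s - e| * ‖w - v‖ + ‖f e - f t - (e - t) • v‖ := by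
        rw [← Real.norm_eq_abs, ← norm_smul]; exact norm_add₃_le
    _ ≤ _ := by
        have := abs_sub_right_of_mem_uIcc he
        gcongr

theorem Convex.norm_image_sub_sub_smul_le {s : Set ℝ} (hs : Convex ℝ s) {f f' : ℝ → E} {v : E}
    {C x y : ℝ} (hf : ∀ u ∈ s, HasDerivWithinAt f (f' u) s u) (bound : ∀ u ∈ s, ‖f' u - v‖ ≤ C)
    (hx : x ∈ s) (hy : y ∈ s) : ‖f y - f x - (y - x) • v‖ ≤ C * |y - x| := by
  have hg : ∀ u ∈ s, HasDerivWithinAt (fun u => f u - u • v) (f' u - v) s u := fun u hu =>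
    ((hf u hu).sub ((hasDerivWithinAt_id u s).smul_const v)).congr_deriv (by rw [one_smul])
  rw [← Real.norm_eq_abs]
  convert hs.norm_image_sub_le_of_norm_hasDerivWithin_le hg bound hx hy using 2
  module

end IntervalEstimates

theorem eventually_nhds_of_forall_isClosed {X ι : Type*} [TopologicalSpace X] {F : ι → Set X}
    {I : Set ι} (hI : I.Finite) (hF : ∀ i, IsClosed (F i)) {p : X → Prop} {t : X}
    (h : ∀ i ∈ I, t ∈ F i → ∀ᶠ x in 𝓝[F i] t, p x) :
    ∀ᶠ x in 𝓝 t, ∀ i ∈ I, x ∈ F i → p x := by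
  refine hI.eventually_all.2 fun i hi => ?_
  by_cases ht : t ∈ F i
  · exact eventually_nhdsWithin_iff.1 (h i hi ht)
  · filter_upwards [(hF i).isOpen_compl.mem_nhds ht] with x hx hxF using absurd hxF hx

structure IsGapFamily (K : Set ℝ) (m M : ℝ) (a b : ℕ → ℝ) : Prop where
  left_mem : ∀ i, a i ∈ K
  right_mem : ∀ i, b i ∈ K
  diff_eq : Icc m M \ K = ⋃ i, Ioo (a i) (b i)
  pairwise_disjoint : Pairwise (Function.onFun Disjoint fun i => Ioo (a i) (b i))

open Classical in
noncomputable def gluedDeriv {β : Type*} (a b : ℕ → ℝ) (ψ' : ℕ → ℝ → β) (g : ℝ → β) (s : ℝ) :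
    β :=
  if h : ∃ i, s ∈ Ioo (a i) (b i) then ψ' h.choose s else g s

namespace IsGapFamily

variable {K : Set ℝ} {m M : ℝ} {a b : ℕ → ℝ}

theorem disjoint (hK : IsGapFamily K m M a b) (i : ℕ) : Disjoint (Ioo (a i) (b i)) K :=
  disjoint_sdiff_left.mono_left (hK.diff_eq ▸ subset_iUnion (fun i => Ioo (a i) (b i)) i)

theorem exists_mem_Ioo (hK : IsGapFamily K m M a b) {s : ℝ} (hs : s ∈ Icc m M) (hsK : s ∉ K) :
    ∃ i, s ∈ Ioo (a i) (b i) :=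
  mem_iUnion.1 (hK.diff_eq ▸ mem_sdiff_of_mem hs hsK)

theorem endpoint_mem (hK : IsGapFamily K m M a b) {i : ℕ} {e : ℝ}
    (he : e ∈ ({a i, b i} : Set ℝ)) : e ∈ K := by
  rcases he with rfl | rfl
  exacts [hK.left_mem i, hK.right_mem i]

theorem gluedDeriv_of_mem {β : Type*} {ψ' : ℕ → ℝ → β} {g : ℝ → β}
    (hK : IsGapFamily K m M a b) {s : ℝ} (hs : s ∈ K) : gluedDeriv a b ψ' g s = g s :=
  dif_neg fun ⟨i, hi⟩ => (hK.disjoint i).notMem_of_mem_left hi hs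

theorem gluedDeriv_of_mem_Ioo {β : Type*} {ψ' : ℕ → ℝ → β} {g : ℝ → β}
    (hK : IsGapFamily K m M a b) {i : ℕ} {s : ℝ} (hs : s ∈ Ioo (a i) (b i)) :
    gluedDeriv a b ψ' g s = ψ' i s := by
  have h : ∃ j, s ∈ Ioo (a j) (b j) := ⟨i, hs⟩
  rw [gluedDeriv, dif_pos h,
    hK.pairwise_disjoint.eq (not_disjoint_iff.2 ⟨s, h.choose_spec, hs⟩)]

theorem eventually_nhdsWithin (hK : IsGapFamily K m M a b) {ε : ℕ → ℝ}
    (hε : Tendsto ε atTop (𝓝 0)) {c t : ℝ} (hc : 0 < c) (ht : t ∈ Icc m M ∩ K)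
    {P Q : ℝ → Prop} (hQ : ∀ᶠ e in 𝓝[Icc m M ∩ K] t, Q e) (hQP : ∀ s ∈ K, Q s → P s)
    (hgap : ∀ i, ∀ s ∈ Ioo (a i) (b i), ∀ e ∈ ({a i, b i} : Set ℝ), e ∈ uIcc t s →
      ε i < c → Q e → P s)
    (hadj : ∀ i, t ∈ Icc (a i) (b i) → ∀ᶠ s in 𝓝[Icc (a i) (b i)] t, P s) :
    ∀ᶠ s in 𝓝[Icc m M] t, P s := by
  obtain ⟨δ, hδ, hQδ⟩ := Metric.eventually_nhds_iff.1 (eventually_nhdsWithin_iff.1 hQ)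
  have hfinite : {i | ¬ε i < c}.Finite :=
    eventually_cofinite.1 (Nat.cofinite_eq_atTop ▸ hε.eventually_lt_const hc)
  have hbad := eventually_nhds_of_forall_isClosed hfinite (fun i => isClosed_Icc)
    fun i _ => hadj i
  filter_upwards [self_mem_nhdsWithin, nhdsWithin_le_nhds (Metric.ball_mem_nhds t hδ),
    nhdsWithin_le_nhds hbad] with s hs hsδ hsbad
  by_cases hsK : s ∈ K
  · exact hQP s hsK (hQδ hsδ ⟨hs, hsK⟩)
  obtain ⟨i, hi⟩ := hK.exists_mem_Ioo hs hsK
  by_cases hεi : ε i < c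
  · obtain ⟨e, he, het⟩ := exists_endpoint_mem_uIcc hi ((hK.disjoint i).notMem_of_mem_right ht.2)
    refine hgap i s hi e he het hεi (hQδ ?_ ⟨ordConnected_Icc.uIcc_subset ht.1 hs het,
      hK.endpoint_mem he⟩)
    rw [Metric.mem_ball, Real.dist_eq] at hsδ
    rw [Real.dist_eq]
    exact (abs_sub_left_of_mem_uIcc het).trans_lt hsδ
  · exact hsbad i hεi (Ioo_subset_Icc_self hi)

end IsGapFamily

structure IsGapFilling {E : Type*} [NormedAddCommGroup E] [NormedSpace ℝ E] (a b ε : ℕ → ℝ)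
    (γ g : ℝ → E) (ψ ψ' : ℕ → ℝ → E) : Prop where
  hasDerivWithinAt : ∀ i, ∀ t ∈ Icc (a i) (b i),
    HasDerivWithinAt (ψ i) (ψ' i t) (Icc (a i) (b i)) t
  continuousOn : ∀ i, ContinuousOn (ψ' i) (Icc (a i) (b i))
  left : ∀ i, ψ i (a i) = γ (a i)
  right : ∀ i, ψ i (b i) = γ (b i)
  deriv_left : ∀ i, ψ' i (a i) = g (a i)
  deriv_right : ∀ i, ψ' i (b i) = g (b i)
  norm_deriv_sub_le : ∀ i, ∀ t ∈ Ioo (a i) (b i), ‖ψ' i t - g (a i)‖ ≤ ε i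

section Gluing

variable {E : Type*} [NormedAddCommGroup E] [NormedSpace ℝ E] {K : Set ℝ} {m M : ℝ}
  {a b ε : ℕ → ℝ} {γ g Γ : ℝ → E} {ψ ψ' : ℕ → ℝ → E}

theorem IsGapFilling.norm_deriv_sub_endpoint_le (hψ : IsGapFilling a b ε γ g ψ ψ') {i : ℕ}
    (hi : a i < b i) {e : ℝ} (he : e ∈ ({a i, b i} : Set ℝ)) {u : ℝ} (hu : u ∈ Icc (a i) (b i)) :
    ‖ψ' i u - g e‖ ≤ 2 * ε i := by
  rcases he with rfl | rfl
  · rw [← hψ.deriv_left]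
    exact norm_sub_le_two_mul_of_forall_mem_Ioo hi (hψ.continuousOn i)
      (hψ.norm_deriv_sub_le i) hu (left_mem_Icc.2 hi.le)
  · rw [← hψ.deriv_right]
    exact norm_sub_le_two_mul_of_forall_mem_Ioo hi (hψ.continuousOn i)
      (hψ.norm_deriv_sub_le i) hu (right_mem_Icc.2 hi.le)

theorem gluedDeriv_eqOn_Icc (hK : IsGapFamily K m M a b) (hψ : IsGapFilling a b ε γ g ψ ψ')
    (i : ℕ) : EqOn (gluedDeriv a b ψ' g) (ψ' i) (Icc (a i) (b i)) :=
  eqOn_Icc_of_eqOn_Ioo (fun _ hs => hK.gluedDeriv_of_mem_Ioo hs)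
    (by rw [hK.gluedDeriv_of_mem (hK.left_mem i), hψ.deriv_left])
    (by rw [hK.gluedDeriv_of_mem (hK.right_mem i), hψ.deriv_right])

theorem continuousOn_gluedDeriv_Icc (hK : IsGapFamily K m M a b)
    (hψ : IsGapFilling a b ε γ g ψ ψ') (i : ℕ) :
    ContinuousOn (gluedDeriv a b ψ' g) (Icc (a i) (b i)) :=
  (hψ.continuousOn i).congr (gluedDeriv_eqOn_Icc hK hψ i)

theorem glued_eqOn_Icc (hK : IsGapFamily K m M a b) (hψ : IsGapFilling a b ε γ g ψ ψ')
    (hΓK : ∀ t ∈ K, Γ t = γ t) (hΓψ : ∀ i, ∀ t ∈ Ioo (a i) (b i), Γ t = ψ i t) (i : ℕ) :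
    EqOn Γ (ψ i) (Icc (a i) (b i)) :=
  eqOn_Icc_of_eqOn_Ioo (hΓψ i) (by rw [hΓK _ (hK.left_mem i), hψ.left])
    (by rw [hΓK _ (hK.right_mem i), hψ.right])

theorem norm_glued_sub_sub_smul_le (hK : IsGapFamily K m M a b)
    (hψ : IsGapFilling a b ε γ g ψ ψ') (hΓK : ∀ t ∈ K, Γ t = γ t)
    (hΓψ : ∀ i, ∀ t ∈ Ioo (a i) (b i), Γ t = ψ i t) {i : ℕ} {s e : ℝ}
    (hs : s ∈ Ioo (a i) (b i)) (he : e ∈ ({a i, b i} : Set ℝ)) :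
    ‖Γ s - Γ e - (s - e) • g e‖ ≤ 2 * ε i * |s - e| := by
  have hi : a i < b i := hs.1.trans hs.2
  have heIcc : e ∈ Icc (a i) (b i) := by
    rcases he with rfl | rfl
    exacts [left_mem_Icc.2 hi.le, right_mem_Icc.2 hi.le]
  rw [glued_eqOn_Icc hK hψ hΓK hΓψ i (Ioo_subset_Icc_self hs),
    glued_eqOn_Icc hK hψ hΓK hΓψ i heIcc]
  exact (convex_Icc _ _).norm_image_sub_sub_smul_le (hψ.hasDerivWithinAt i)
    (fun u hu => hψ.norm_deriv_sub_endpoint_le hi he hu) heIcc (Ioo_subset_Icc_self hs)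

theorem hasDerivAt_glued_of_mem_Ioo (hK : IsGapFamily K m M a b)
    (hψ : IsGapFilling a b ε γ g ψ ψ') (hΓψ : ∀ i, ∀ t ∈ Ioo (a i) (b i), Γ t = ψ i t) {i : ℕ}
    {t : ℝ} (ht : t ∈ Ioo (a i) (b i)) : HasDerivAt Γ (gluedDeriv a b ψ' g t) t := by
  rw [hK.gluedDeriv_of_mem_Ioo ht]
  exact ((hψ.hasDerivWithinAt i t (Ioo_subset_Icc_self ht)).hasDerivAt
    (Icc_mem_nhds ht.1 ht.2)).congr_of_eventuallyEq
    (eventuallyEq_of_mem (Ioo_mem_nhds ht.1 ht.2) (hΓψ i))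

theorem hasDerivWithinAt_glued_of_mem (hK : IsGapFamily K m M a b)
    (hψ : IsGapFilling a b ε γ g ψ ψ') (hε : Tendsto ε atTop (𝓝 0))
    (hγ : ∀ t ∈ K, HasDerivWithinAt γ (g t) (Icc m M) t) (hg : ContinuousOn g K)
    (hΓK : ∀ t ∈ K, Γ t = γ t) (hΓψ : ∀ i, ∀ t ∈ Ioo (a i) (b i), Γ t = ψ i t) {t : ℝ}
    (ht : t ∈ Icc m M ∩ K) : HasDerivWithinAt Γ (g t) (Icc m M) t := by
  rw [hasDerivWithinAt_iff_isLittleO, isLittleO_iff]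
  intro c hc
  have hQ : ∀ᶠ e in 𝓝[Icc m M ∩ K] t,
      dist (g e) (g t) < c / 4 ∧ ‖γ e - γ t - (e - t) • g t‖ ≤ c / 4 * ‖e - t‖ :=
    ((Metric.tendsto_nhds.1 (hg t ht.2) (c / 4) (by positivity)).filter_mono
      (nhdsWithin_mono _ inter_subset_right)).and
    ((isLittleO_iff.1 (hasDerivWithinAt_iff_isLittleO.1 (hγ t ht.2)) (by positivity)).filter_mono
      (nhdsWithin_mono _ inter_subset_left))
  have hΓt : Γ t = γ t := hΓK t ht.2
  refine hK.eventually_nhdsWithin hε (by positivity : 0 < c / 4) ht hQ ?_ ?_ ?_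
  · rintro s hs ⟨-, hγs⟩
    rw [hΓK s hs, hΓt]
    exact hγs.trans (by gcongr; linarith)
  · rintro i s hs e he het hεi ⟨hge, hγe⟩
    have hψs := norm_glued_sub_sub_smul_le hK hψ hΓK hΓψ hs he
    have hγe' : ‖Γ e - Γ t - (e - t) • g t‖ ≤ c / 4 * |e - t| := by
      rw [hΓK e (hK.endpoint_mem he), hΓt, ← Real.norm_eq_abs]; exact hγe
    have hge' : ‖g e - g t‖ ≤ c / 4 := (dist_eq_norm (g e) (g t) ▸ hge).le
    calc ‖Γ s - Γ t - (s - t) • g t‖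
        ≤ ‖Γ s - Γ e - (s - e) • g e‖ + |s - t| * ‖g e - g t‖ + ‖Γ e - Γ t - (e - t) • g t‖ :=
          norm_sub_sub_smul_le_of_mem_uIcc Γ het _ _
      _ ≤ 2 * ε i * |s - e| + |s - t| * (c / 4) + c / 4 * |e - t| := by gcongr
      _ ≤ c * ‖s - t‖ := by
          rw [Real.norm_eq_abs]
          nlinarith [mul_nonneg (sub_nonneg.2 hεi.le) (abs_nonneg (s - e)),
            mul_le_mul_of_nonneg_left (abs_sub_right_of_mem_uIcc het) hc.le,
            mul_le_mul_of_nonneg_left (abs_sub_left_of_mem_uIcc het) hc.le]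
  · intro i hti
    have hψt : ψ' i t = g t :=
      (gluedDeriv_eqOn_Icc hK hψ i hti).symm.trans (hK.gluedDeriv_of_mem ht.2)
    have hΓ := (hψ.hasDerivWithinAt i t hti).congr_of_mem (glued_eqOn_Icc hK hψ hΓK hΓψ i) hti
    rw [hψt] at hΓ
    exact isLittleO_iff.1 (hasDerivWithinAt_iff_isLittleO.1 hΓ) hc

theorem continuousWithinAt_gluedDeriv_of_mem (hK : IsGapFamily K m M a b)
    (hψ : IsGapFilling a b ε γ g ψ ψ') (hε : Tendsto ε atTop (𝓝 0)) (hg : ContinuousOn g K)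
    {t : ℝ} (ht : t ∈ Icc m M ∩ K) : ContinuousWithinAt (gluedDeriv a b ψ' g) (Icc m M) t := by
  rw [ContinuousWithinAt, hK.gluedDeriv_of_mem ht.2, Metric.tendsto_nhds]
  intro c hc
  refine hK.eventually_nhdsWithin hε (by positivity : 0 < c / 3) ht
    ((Metric.tendsto_nhds.1 (hg t ht.2) (c / 3) (by positivity)).filter_mono
      (nhdsWithin_mono _ inter_subset_right)) ?_ ?_ ?_
  · intro s hs hgs
    rw [hK.gluedDeriv_of_mem hs]
    linarith
  · intro i s hs e he _ hεi hge
    have hψs := hψ.norm_deriv_sub_endpoint_le (hs.1.trans hs.2) he (Ioo_subset_Icc_self hs)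
    rw [hK.gluedDeriv_of_mem_Ioo hs]
    calc dist (ψ' i s) (g t) ≤ dist (ψ' i s) (g e) + dist (g e) (g t) := dist_triangle _ _ _
      _ < c := by rw [dist_eq_norm (ψ' i s)]; linarith
  · intro i hti
    have hD := continuousOn_gluedDeriv_Icc hK hψ i t hti
    rw [ContinuousWithinAt, hK.gluedDeriv_of_mem ht.2] at hD
    exact Metric.tendsto_nhds.1 hD c hc

theorem hasDerivWithinAt_glued (hK : IsGapFamily K m M a b) (hψ : IsGapFilling a b ε γ g ψ ψ')
    (hε : Tendsto ε atTop (𝓝 0)) (hγ : ∀ t ∈ K, HasDerivWithinAt γ (g t) (Icc m M) t)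
    (hg : ContinuousOn g K) (hΓK : ∀ t ∈ K, Γ t = γ t)
    (hΓψ : ∀ i, ∀ t ∈ Ioo (a i) (b i), Γ t = ψ i t) {t : ℝ} (ht : t ∈ Icc m M) :
    HasDerivWithinAt Γ (gluedDeriv a b ψ' g t) (Icc m M) t := by
  by_cases htK : t ∈ K
  · rw [hK.gluedDeriv_of_mem htK]
    exact hasDerivWithinAt_glued_of_mem hK hψ hε hγ hg hΓK hΓψ ⟨ht, htK⟩
  · obtain ⟨i, hi⟩ := hK.exists_mem_Ioo ht htK
    exact (hasDerivAt_glued_of_mem_Ioo hK hψ hΓψ hi).hasDerivWithinAt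

theorem continuousOn_gluedDeriv (hK : IsGapFamily K m M a b) (hψ : IsGapFilling a b ε γ g ψ ψ')
    (hε : Tendsto ε atTop (𝓝 0)) (hg : ContinuousOn g K) :
    ContinuousOn (gluedDeriv a b ψ' g) (Icc m M) := by
  intro t ht
  by_cases htK : t ∈ K
  · exact continuousWithinAt_gluedDeriv_of_mem hK hψ hε hg ⟨ht, htK⟩
  · obtain ⟨i, hi⟩ := hK.exists_mem_Ioo ht htK
    exact ((continuousOn_gluedDeriv_Icc hK hψ i).continuousAt
      (Icc_mem_nhds hi.1 hi.2)).continuousWithinAt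

end Gluing

theorem glued_curve_is_C1 (d : ℕ) (K : Set ℝ) (m M : ℝ)
    (γ g : ℝ → EuclideanSpace ℝ (Fin d))
    (hγdiff : ∀ t ∈ K, HasDerivWithinAt γ (g t) (Set.Icc m M) t)
    (hgcont : ContinuousOn g K)
    (a b : ℕ → ℝ)
    (haK : ∀ i, a i ∈ K) (hbK : ∀ i, b i ∈ K)
    (hcover : Set.Icc m M \ K = ⋃ i, Set.Ioo (a i) (b i))
    (hdisj : Pairwise (Function.onFun Disjoint fun i => Set.Ioo (a i) (b i)))
    (ψ ψ' : ℕ → ℝ → EuclideanSpace ℝ (Fin d))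
    (hψdiff : ∀ i, ∀ t ∈ Set.Icc (a i) (b i),
      HasDerivWithinAt (ψ i) (ψ' i t) (Set.Icc (a i) (b i)) t)
    (hψcont : ∀ i, ContinuousOn (ψ' i) (Set.Icc (a i) (b i)))
    (hψa : ∀ i, ψ i (a i) = γ (a i)) (hψb : ∀ i, ψ i (b i) = γ (b i))
    (hψ'a : ∀ i, ψ' i (a i) = g (a i)) (hψ'b : ∀ i, ψ' i (b i) = g (b i))
    (ε : ℕ → ℝ) (hε : Filter.Tendsto ε Filter.atTop (nhds 0))
    (hψbound : ∀ i, ∀ t ∈ Set.Ioo (a i) (b i), ‖ψ' i t - g (a i)‖ ≤ ε i)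
    (Γ : ℝ → EuclideanSpace ℝ (Fin d))
    (hΓK : ∀ t ∈ K, Γ t = γ t)
    (hΓψ : ∀ i, ∀ t ∈ Set.Ioo (a i) (b i), Γ t = ψ i t) :
    ∃ D : ℝ → EuclideanSpace ℝ (Fin d),
      (∀ t ∈ K, D t = g t) ∧
      (∀ i, ∀ t ∈ Set.Ioo (a i) (b i), D t = ψ' i t) ∧
      (∀ t ∈ Set.Icc m M, HasDerivWithinAt Γ (D t) (Set.Icc m M) t) ∧
      ContinuousOn D (Set.Icc m M) := by
  have hgaps : IsGapFamily K m M a b := ⟨haK, hbK, hcover, hdisj⟩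
  have hfill : IsGapFilling a b ε γ g ψ ψ' := ⟨hψdiff, hψcont, hψa, hψb, hψ'a, hψ'b, hψbound⟩
  exact ⟨gluedDeriv a b ψ' g, fun _ ht => hgaps.gluedDeriv_of_mem ht,
    fun _ _ ht => hgaps.gluedDeriv_of_mem_Ioo ht,
    fun _ ht => hasDerivWithinAt_glued hgaps hfill hε hγdiff hgcont hΓK hΓψ ht,
    continuousOn_gluedDeriv hgaps hfill hε hgcont⟩
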